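/- arXiv:math/9805031 — 2 statements merged into one kernel-verified Lean document; each statement's English description precedes it below -/
import Mathlib

section
/- Whether a smooth closed subvariety X ⊂ V is transverse to infinity does not depend on the choice of Hermitian inner product on V: if there is a constant k > 0 such that ∠₁(x, T_x X) < k/‖x‖₁ for all x ∈ X with respect to one inner product, then for any other Hermitian inner product on V there exists k' > 0 such that ∠₂(x, T_x X) < k'/‖x‖₂ for all x ∈ X. -/
/-!
Write `θ(p, v)` for the Hermitian angle `arccos (|⟪p, v⟫| / (‖p‖ ‖v‖))` between `p` and the
line `𝕜 ∙ v`. Then `‖p‖ sin θ(p, v)` is the distance from `p` to that line, and a linear map `T`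
multiplies this distance by at most `‖T‖`. Since `sin θ ≤ θ ≤ (π / 2) sin θ` on `[0, π / 2]`,
`‖T x‖ θ(T x, T v) ≤ (π / 2) ‖T‖ ‖x‖ θ(x, v)`, so `θ(x, v) < k / ‖x‖` turns into
`θ(T x, T v) < k' / ‖T x‖` with `k' = (π / 2) (‖T‖ + 1) k`.
-/

variable {d : ℕ}

/-- The angle between two vectors with respect to the standard Hermitian inner product
on `ℂ^d`: `arccos (|⟨p,v⟩| / (‖p‖‖v‖))`. -/
noncomputable def vecAngle (p v : EuclideanSpace ℂ (Fin d)) : ℝ :=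
  Real.arccos (‖(inner ℂ p v : ℂ)‖ / (‖p‖ * ‖v‖))

open Real

variable {𝕜 E F : Type*} [RCLike 𝕜] [NormedAddCommGroup E] [InnerProductSpace 𝕜 E]
  [NormedAddCommGroup F] [InnerProductSpace 𝕜 F]

variable (𝕜) in
/-- `vecAngle` is `hermitianAngle ℂ` on `ℂ^d`. -/
noncomputable def hermitianAngle (p v : E) : ℝ :=
  arccos (‖(inner 𝕜 p v : 𝕜)‖ / (‖p‖ * ‖v‖))

lemma hermitianAngle_nonneg (p v : E) : 0 ≤ hermitianAngle 𝕜 p v := arccos_nonneg _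

lemma hermitianAngle_le_pi_div_two (p v : E) : hermitianAngle 𝕜 p v ≤ π / 2 :=
  arccos_le_pi_div_two.2 (by positivity)

lemma norm_starProjection_span_singleton (p v : E) :
    ‖(𝕜 ∙ v).starProjection p‖ = ‖(inner 𝕜 p v : 𝕜)‖ / ‖v‖ := by
  rw [Submodule.starProjection_singleton, norm_smul, norm_div, ← norm_inner_symm,
    RCLike.norm_ofReal, abs_of_nonneg (by positivity)]
  rcases eq_or_ne ‖v‖ 0 with hv | hv
  · simp [hv]
  · field_simp

lemma norm_mul_sin_hermitianAngle (p v : E) :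
    ‖p‖ * sin (hermitianAngle 𝕜 p v) = ‖p - (𝕜 ∙ v).starProjection p‖ := by
  have pythagoras := Submodule.norm_sq_eq_add_norm_sq_starProjection p (𝕜 ∙ v)
  rw [Submodule.starProjection_orthogonal, sub_apply,
    ContinuousLinearMap.id_apply, norm_starProjection_span_singleton] at pythagoras
  have key : ‖p‖ ^ 2 * (1 - (‖(inner 𝕜 p v : 𝕜)‖ / (‖p‖ * ‖v‖)) ^ 2)
      = ‖p - (𝕜 ∙ v).starProjection p‖ ^ 2 := by
    rcases eq_or_ne p 0 with rfl | hp
    · simp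
    · have := norm_ne_zero_iff.2 hp
      rw [mul_comm ‖p‖, ← div_div, div_pow _ ‖p‖, mul_one_sub, mul_div_cancel₀ _ (by positivity)]
      linarith
  rw [hermitianAngle, sin_arccos, ← sqrt_sq (norm_nonneg (p - _)), ← key,
    sqrt_mul (sq_nonneg _), sqrt_sq (norm_nonneg p)]

lemma norm_sub_starProjection_le {K : Submodule 𝕜 E} [K.HasOrthogonalProjection] (y : E)
    {x : E} (hx : x ∈ K) : ‖y - K.starProjection y‖ ≤ ‖y - x‖ := by
  rw [Submodule.starProjection_minimal]
  exact ciInf_le ⟨0, Set.forall_mem_range.2 fun _ => norm_nonneg _⟩ (⟨x, hx⟩ : K)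

lemma norm_sub_starProjection_span_singleton_map_le (T : E →L[𝕜] F) (p v : E) :
    ‖T p - (𝕜 ∙ T v).starProjection (T p)‖ ≤ ‖T‖ * ‖p - (𝕜 ∙ v).starProjection p‖ := by
  obtain ⟨c, hc⟩ := Submodule.mem_span_singleton.1 ((𝕜 ∙ v).starProjection_apply_mem p)
  calc ‖T p - (𝕜 ∙ T v).starProjection (T p)‖
      ≤ ‖T p - T ((𝕜 ∙ v).starProjection p)‖ := by
        refine norm_sub_starProjection_le _ (Submodule.mem_span_singleton.2 ⟨c, ?_⟩)
        rw [← hc, map_smul]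
    _ = ‖T (p - (𝕜 ∙ v).starProjection p)‖ := by rw [map_sub]
    _ ≤ ‖T‖ * ‖p - (𝕜 ∙ v).starProjection p‖ := T.le_opNorm _

lemma norm_mul_hermitianAngle_map_le (T : E →L[𝕜] F) (p v : E) :
    ‖T p‖ * hermitianAngle 𝕜 (T p) (T v) ≤ π / 2 * ‖T‖ * (‖p‖ * hermitianAngle 𝕜 p v) := by
  have hθ := hermitianAngle_nonneg (𝕜 := 𝕜) (T p) (T v)
  have jordan : hermitianAngle 𝕜 (T p) (T v) ≤ π / 2 * sin (hermitianAngle 𝕜 (T p) (T v)) := by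
    calc hermitianAngle 𝕜 (T p) (T v) = π / 2 * (2 / π * hermitianAngle 𝕜 (T p) (T v)) := by
          field_simp
      _ ≤ π / 2 * sin (hermitianAngle 𝕜 (T p) (T v)) := by
          gcongr
          exact mul_le_sin hθ (hermitianAngle_le_pi_div_two _ _)
  calc ‖T p‖ * hermitianAngle 𝕜 (T p) (T v)
      ≤ π / 2 * (‖T p‖ * sin (hermitianAngle 𝕜 (T p) (T v))) := by
        rw [mul_left_comm]
        exact mul_le_mul_of_nonneg_left jordan (norm_nonneg _)
    _ ≤ π / 2 * (‖T‖ * (‖p‖ * sin (hermitianAngle 𝕜 p v))) := by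
        rw [norm_mul_sin_hermitianAngle, norm_mul_sin_hermitianAngle]
        gcongr
        exact norm_sub_starProjection_span_singleton_map_le T p v
    _ ≤ π / 2 * ‖T‖ * (‖p‖ * hermitianAngle 𝕜 p v) := by
        rw [mul_assoc]
        gcongr
        exact sin_le (hermitianAngle_nonneg _ _)

lemma sInf_lt_of_forall_ne_zero_lt {R M : Type*} [Semiring R] [AddCommMonoid M] [Module R M]
    {K : Submodule R M} {f g : M → ℝ} {r t : ℝ}
    (hf : sInf {a | ∃ v ∈ K, v ≠ 0 ∧ a = f v} < r) (hg : ∀ v ∈ K, v ≠ 0 → 0 ≤ g v)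
    (hfg : ∀ v ∈ K, v ≠ 0 → f v < r → g v < t) (ht : 0 < t) :
    sInf {a | ∃ v ∈ K, v ≠ 0 ∧ a = g v} < t := by
  by_cases hK : ∃ v ∈ K, v ≠ 0
  · obtain ⟨v, hvK, hv0⟩ := hK
    have hne : {a | ∃ v ∈ K, v ≠ 0 ∧ a = f v}.Nonempty := ⟨f v, v, hvK, hv0, rfl⟩
    have hbdd : BddBelow {a | ∃ v ∈ K, v ≠ 0 ∧ a = g v} := by
      refine ⟨0, ?_⟩
      rintro _ ⟨u, huK, hu0, rfl⟩
      exact hg u huK hu0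
    obtain ⟨_, ⟨w, hwK, hw0, rfl⟩, hw⟩ := exists_lt_of_csInf_lt hne hf
    exact (csInf_le hbdd ⟨w, hwK, hw0, rfl⟩).trans_lt (hfg w hwK hw0 hw)
  · have hempty : {a | ∃ v ∈ K, v ≠ 0 ∧ a = g v} = ∅ :=
      Set.eq_empty_iff_forall_notMem.2 fun _ ⟨v, hvK, hv0, _⟩ => hK ⟨v, hvK, hv0⟩
    rwa [hempty, Real.sInf_empty]

/-- Transversality to infinity is independent of the Hermitian inner
product.  A second Hermitian inner product on `V = ℂ^d` is encoded by a linear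
automorphism `T` via `⟨u,v⟩₂ = ⟨Tu,Tv⟩₁` (every Hermitian inner product on a
finite-dimensional space arises this way), so the second angle between `p` and `v`
is `vecAngle (T p) (T v)` and the second norm of `x` is `‖T x‖`.  If a subset `X`,
with tangent spaces `Tang x ⊂ V`, satisfies the transverse-to-infinity estimate
`∠₁(x, T_x X) < k/‖x‖₁` for some `k > 0`, then there is `k' > 0` with
`∠₂(x, T_x X) < k'/‖x‖₂` for all `x ∈ X`. -/
theorem transverse_to_infinity_independent_of_inner_product
    (T : EuclideanSpace ℂ (Fin d) ≃ₗ[ℂ] EuclideanSpace ℂ (Fin d))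
    (X : Set (EuclideanSpace ℂ (Fin d)))
    (Tang : EuclideanSpace ℂ (Fin d) → Submodule ℂ (EuclideanSpace ℂ (Fin d)))
    (k : ℝ) (hk : 0 < k)
    (h1 : ∀ x ∈ X,
      sInf {a : ℝ | ∃ v ∈ Tang x, v ≠ 0 ∧ a = vecAngle x v} < k / ‖x‖) :
    ∃ k' : ℝ, 0 < k' ∧ ∀ x ∈ X,
      sInf {a : ℝ | ∃ v ∈ Tang x, v ≠ 0 ∧ a = vecAngle (T x) (T v)} < k' / ‖T x‖ := by
  let L := LinearMap.toContinuousLinearMap T.toLinearMap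
  refine ⟨π / 2 * (‖L‖ + 1) * k, by positivity, fun x hxX => ?_⟩
  have hx : 0 < ‖x‖ := by
    have hθ : 0 ≤ sInf {a | ∃ v ∈ Tang x, v ≠ 0 ∧ a = vecAngle x v} :=
      Real.sInf_nonneg fun _ ⟨v, _, _, ha⟩ => ha ▸ hermitianAngle_nonneg x v
    exact (div_pos_iff_of_pos_left hk).1 (hθ.trans_lt (h1 x hxX))
  have hTx : 0 < ‖T x‖ := norm_pos_iff.2 (T.map_ne_zero_iff.2 (norm_pos_iff.1 hx))
  refine sInf_lt_of_forall_ne_zero_lt (h1 x hxX) (fun v _ _ => hermitianAngle_nonneg _ _)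
    (fun v _ _ hv => ?_) (by positivity)
  rw [lt_div_iff₀ hx, mul_comm] at hv
  rw [lt_div_iff₀ hTx, mul_comm]
  calc ‖L x‖ * hermitianAngle ℂ (L x) (L v)
      ≤ π / 2 * ‖L‖ * (‖x‖ * vecAngle x v) := norm_mul_hermitianAngle_map_le L x v
    _ ≤ π / 2 * (‖L‖ + 1) * (‖x‖ * vecAngle x v) := by
        gcongr
        · exact mul_nonneg hx.le (hermitianAngle_nonneg _ _)
        · linarith
    _ < π / 2 * (‖L‖ + 1) * k := by gcongr
end

section
/- Let f = ∏_{i∈I} l_i : V → ℂ be a finite product of nonzero linear forms and X = f⁻¹(1). Then X is transverse to infinity: there exists k > 0 such that for every x ∈ X, the angle between x and the tangent space T_x X = Ker(d_x f) satisfies ∠(x, T_x X) < k/‖x‖. -/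
open Finset

variable {d : ℕ}

open Topology Real

/-!
For `x ∈ X`, Euler's identity gives `d_x f x = n f x = n`, so the distance from `x` to
`T_x X = ker d_x f` is `n / ‖d_x f‖`, and the angle between `x` and its orthogonal projection on
`T_x X` is at most `π / 2` times that distance over `‖x‖`. It remains to bound `‖d_x f‖` below on
`X`; by homogeneity this is the Łojasiewicz inequality `|f| ^ (n - 1) ≤ C ‖df‖ ^ n`.

The Łojasiewicz inequality is proved by strong induction on the set of forms. Both sides only
depend on the component of `u` orthogonal to the common kernel and scale alike, so it suffices to
prove it near each point `u` of the unit sphere of that complement, where some form does not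
vanish. Write `f = h * g` with `g` the product of the forms vanishing at `u`. Near `u`, `h` is
bounded above and away from `0`, `g` is small, and by the inequality for `g` the term `h • dg`
dominates `g • dh` in `df`; the inequality for `g` then yields the one for `f`.
-/

theorem le_of_pow_le_mul_pow_mul {γ τ C K : ℝ} {m : ℕ} (hγ : 0 < γ) (hτ : 0 ≤ τ) (hC : 0 ≤ C)
    (h : γ ^ m ≤ C * τ ^ m * γ) (hsmall : C * K ^ m * γ < 1) : K * γ ≤ τ := by
  by_contra! hlt
  have : γ ^ m < γ ^ m :=
    calc γ ^ m ≤ C * τ ^ m * γ := h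
      _ ≤ C * (K * γ) ^ m * γ := by gcongr
      _ = (C * K ^ m * γ) * γ ^ m := by ring
      _ < 1 * γ ^ m := by gcongr
      _ = γ ^ m := one_mul _
  exact this.false

theorem pow_le_of_pow_le_of_le_one {γ τ C : ℝ} {m n : ℕ} (hγ : 0 ≤ γ) (hγ1 : γ ≤ 1) (hτ : 0 ≤ τ)
    (hm : m ≠ 0) (hmn : m ≤ n) (h : γ ^ m ≤ C * τ ^ m * γ) :
    γ ^ n ≤ max 1 (C ^ n) * τ ^ n * γ := by
  have hCn : C ^ n ≤ max 1 (C ^ n) ^ m :=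
    (le_max_right _ _).trans (le_self_pow₀ (le_max_left _ _) hm)
  refine le_of_pow_le_pow_left₀ hm (by positivity) ?_
  calc (γ ^ n) ^ m = (γ ^ m) ^ n := by rw [← pow_mul, ← pow_mul, mul_comm]
    _ ≤ (C * τ ^ m * γ) ^ n := pow_le_pow_left₀ (by positivity) h n
    _ = C ^ n * (τ ^ n) ^ m * γ ^ n := by ring
    _ ≤ max 1 (C ^ n) ^ m * (τ ^ n) ^ m * γ ^ m := by
      gcongr ?_ * _ * ?_
      exact pow_le_pow_of_le_one hγ hγ1 hmn
    _ = (max 1 (C ^ n) * τ ^ n * γ) ^ m := by ring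

theorem Finset.prod_erase_eq_prod_sdiff_mul {ι M : Type*} [DecidableEq ι] [CommMonoid M]
    (f : ι → M) {s t : Finset ι} (ht : t ⊆ s) {i : ι} (hi : i ∈ t) :
    ∏ j ∈ s.erase i, f j = (∏ j ∈ s \ t, f j) * ∏ j ∈ t.erase i, f j := by
  rw [← prod_sdiff (erase_subset_erase i ht)]
  congr 2
  ext a
  simp only [mem_sdiff, mem_erase]
  grind

theorem IsCompact.exists_forall_of_forall_eventually {X α : Type*} [TopologicalSpace X]
    [SemilatticeSup α] [Nonempty α] {T : Set X} (hT : IsCompact T) {p : α → X → Prop}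
    (hmono : ∀ ⦃C C' x⦄, C ≤ C' → p C x → p C' x) (h : ∀ x ∈ T, ∃ C, ∀ᶠ y in 𝓝 x, p C y) :
    ∃ C, ∀ x ∈ T, p C x := by
  refine hT.induction_on (p := fun S => ∃ C, ∀ x ∈ S, p C x) ⟨Classical.arbitrary α, by simp⟩
    (fun S S' hS ⟨C, hC⟩ => ⟨C, fun x hx => hC x (hS hx)⟩)
    (fun S S' ⟨C, hC⟩ ⟨C', hC'⟩ => ⟨C ⊔ C', fun x hx => hx.elim
      (fun hx => hmono le_sup_left (hC x hx)) (fun hx => hmono le_sup_right (hC' x hx))⟩)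
    fun x hx => ?_
  obtain ⟨C, hC⟩ := h x hx
  exact ⟨{y | p C y}, mem_nhdsWithin_of_mem_nhds hC, C, fun y hy => hy⟩


namespace LinearForms

variable {𝕜 E ι : Type*} [RCLike 𝕜] [NormedAddCommGroup E]

section Algebra

variable [NormedSpace 𝕜 E] (l : ι → E →L[𝕜] 𝕜) (s : Finset ι)

def formsProd (u : E) : 𝕜 := ∏ i ∈ s, l i u

theorem continuous_formsProd : Continuous (formsProd l s) :=
  continuous_finsetProd _ fun i _ => (l i).continuous

theorem formsProd_smul (c : 𝕜) (u : E) : formsProd l s (c • u) = c ^ #s * formsProd l s u := by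
  simp only [formsProd, map_smul, smul_eq_mul, prod_mul_distrib, prod_const]

def commonKer : Submodule 𝕜 E :=
  ⨅ i ∈ s, LinearMap.ker (l i : E →ₗ[𝕜] 𝕜)

variable {l s} in
theorem mem_commonKer {u : E} : u ∈ commonKer l s ↔ ∀ i ∈ s, l i u = 0 := by
  simp [commonKer]

variable {l s} in
theorem formsProd_congr {u u' : E} (h : ∀ i ∈ s, l i u = l i u') :
    formsProd l s u = formsProd l s u' :=
  prod_congr rfl h

variable [DecidableEq ι]

def formsProdDeriv (u : E) : E →L[𝕜] 𝕜 := ∑ i ∈ s, (∏ j ∈ s.erase i, l j u) • l i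

theorem continuous_formsProdDeriv : Continuous (formsProdDeriv l s) :=
  continuous_finsetSum _ fun _ _ =>
    (continuous_finsetProd _ fun j _ => (l j).continuous).smul continuous_const

theorem formsProdDeriv_apply_self (u : E) : formsProdDeriv l s u u = #s * formsProd l s u := by
  simp only [formsProdDeriv, formsProd, _root_.sum_apply, FunLike.coe_smul, Pi.smul_apply,
    smul_eq_mul]
  rw [sum_congr rfl fun i hi => prod_erase_mul _ _ hi, sum_const, nsmul_eq_mul]

theorem formsProdDeriv_smul (c : 𝕜) (u : E) :
    formsProdDeriv l s (c • u) = c ^ (#s - 1) • formsProdDeriv l s u := by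
  simp only [formsProdDeriv, smul_sum, smul_smul]
  refine sum_congr rfl fun i hi => ?_
  simp only [map_smul, smul_eq_mul, prod_mul_distrib, prod_const, card_erase_of_mem hi]

variable {l s}

theorem formsProdDeriv_congr {u u' : E} (h : ∀ i ∈ s, l i u = l i u') :
    formsProdDeriv l s u = formsProdDeriv l s u' :=
  sum_congr rfl fun _ _ => by rw [prod_congr rfl fun j hj => h j (mem_of_mem_erase hj)]

theorem formsProd_eq_mul_sdiff {t : Finset ι} (ht : t ⊆ s) (u : E) :
    formsProd l s u = formsProd l (s \ t) u * formsProd l t u :=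
  (prod_sdiff ht).symm

theorem formsProdDeriv_eq_add_sdiff {t : Finset ι} (ht : t ⊆ s) (u : E) :
    formsProdDeriv l s u =
      formsProd l (s \ t) u • formsProdDeriv l t u +
        formsProd l t u • formsProdDeriv l (s \ t) u := by
  have hsdiff : s \ (s \ t) = t := Finset.sdiff_sdiff_eq_self ht
  simp only [formsProdDeriv, formsProd, smul_sum, ← sum_sdiff ht, smul_smul]
  rw [add_comm]
  congr 1 <;> refine sum_congr rfl fun i hi => ?_
  · rw [prod_erase_eq_prod_sdiff_mul _ ht hi]
  · rw [prod_erase_eq_prod_sdiff_mul _ sdiff_subset hi, hsdiff]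

end Algebra

section Lojasiewicz

variable [NormedSpace 𝕜 E] [DecidableEq ι] (l : ι → E →L[𝕜] 𝕜) (s : Finset ι)

/-- The Łojasiewicz gradient inequality `‖P u‖ ^ (n - 1) ≤ C * ‖dP u‖ ^ n` for the product `P`
of `n` forms, multiplied by `‖P u‖` so that it holds trivially where `P` vanishes. -/
def LojasiewiczIneq (C : ℝ) (u : E) : Prop :=
  ‖formsProd l s u‖ ^ #s ≤ C * ‖formsProdDeriv l s u‖ ^ #s * ‖formsProd l s u‖

variable {l s}

theorem LojasiewiczIneq.mono {C C' : ℝ} {u : E} (h : LojasiewiczIneq l s C u) (hC : C ≤ C') :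
    LojasiewiczIneq l s C' u :=
  h.trans (by gcongr)

theorem lojasiewiczIneq_of_formsProd_eq_zero {u : E} (hu : formsProd l s u = 0) (C : ℝ) :
    LojasiewiczIneq l s C u := by
  have hs : #s ≠ 0 := by
    rintro hs
    simp [formsProd, card_eq_zero.1 hs] at hu
  simp [LojasiewiczIneq, hu, hs]

theorem LojasiewiczIneq.smul {C : ℝ} {u : E} (h : LojasiewiczIneq l s C u) (c : 𝕜) :
    LojasiewiczIneq l s C (c • u) := by
  have hexp : (#s - 1) * #s + #s = #s * #s := by
    cases #s <;> simp [Nat.succ_mul]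
  unfold LojasiewiczIneq at h ⊢
  rw [formsProd_smul, formsProdDeriv_smul, norm_mul, norm_smul, norm_pow, norm_pow]
  calc (‖c‖ ^ #s * ‖formsProd l s u‖) ^ #s
      = ‖c‖ ^ (#s * #s) * ‖formsProd l s u‖ ^ #s := by rw [mul_pow, pow_mul]
    _ ≤ ‖c‖ ^ (#s * #s) * (C * ‖formsProdDeriv l s u‖ ^ #s * ‖formsProd l s u‖) := by gcongr
    _ = C * (‖c‖ ^ (#s - 1) * ‖formsProdDeriv l s u‖) ^ #s * (‖c‖ ^ #s * ‖formsProd l s u‖) := by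
      rw [← hexp, pow_add, pow_mul]
      ring

theorem eventually_lojasiewiczIneq_of_formsProd_ne_zero (hs : s.Nonempty) {u : E}
    (hu : formsProd l s u ≠ 0) : ∃ C, ∀ᶠ v in 𝓝 u, LojasiewiczIneq l s C v := by
  set N : E → ℝ := fun v => ‖formsProdDeriv l s v‖ ^ #s * ‖formsProd l s v‖
  have hN : Continuous N := by
    have := continuous_formsProd l s
    have := continuous_formsProdDeriv l s
    fun_prop
  have hNu : N u ≠ 0 := by
    have hDu : formsProdDeriv l s u ≠ 0 := fun h => by
      have := formsProdDeriv_apply_self l s u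
      simp [h, hu, hs.ne_empty] at this
    simp [N, hu, hDu]
  have hratio : ContinuousAt (fun v => ‖formsProd l s v‖ ^ #s / N v) u :=
    ((continuous_formsProd l s).norm.pow _).continuousAt.div hN.continuousAt hNu
  refine ⟨‖formsProd l s u‖ ^ #s / N u + 1, ?_⟩
  filter_upwards [hratio.eventually (gt_mem_nhds (lt_add_one _)),
    hN.continuousAt.eventually_ne hNu] with v hv hNv
  have hNv : 0 < N v := lt_of_le_of_ne (by positivity) (Ne.symm hNv)
  rw [div_lt_iff₀ hNv] at hv
  exact hv.le.trans_eq (mul_assoc _ _ _).symm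

theorem lojasiewiczIneq_of_split {t : Finset ι} (ht : t ⊆ s) (htne : t.Nonempty) {u : E}
    {a A M C : ℝ} (ha : 0 < a) (hC : 0 ≤ C) (hIH : LojasiewiczIneq l t C u)
    (hah : a ≤ ‖formsProd l (s \ t) u‖) (hhA : ‖formsProd l (s \ t) u‖ ≤ A)
    (hM : ‖formsProdDeriv l (s \ t) u‖ ≤ M) (hg1 : ‖formsProd l t u‖ ≤ 1)
    (hgsmall : C * (2 * M / a) ^ #t * ‖formsProd l t u‖ < 1) :
    LojasiewiczIneq l s (A ^ #s * max 1 (C ^ #s) * (2 / a) ^ #s / a) u := by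
  by_cases hg : formsProd l t u = 0
  · exact lojasiewiczIneq_of_formsProd_eq_zero
      (by rw [formsProd_eq_mul_sdiff ht, hg, mul_zero]) _
  set γ := ‖formsProd l t u‖
  set τ := ‖formsProdDeriv l t u‖
  have hγ : 0 < γ := norm_pos_iff.2 hg
  -- With `g` the product over `t` and `h` the one over `s \ t`: since `g u` is small, the term
  -- `h • dg` dominates `g • dh` in `d(h * g)`.
  have hMγ : 2 * M / a * γ ≤ τ := le_of_pow_le_mul_pow_mul hγ (norm_nonneg _) hC hIH hgsmall
  have hD : a / 2 * τ ≤ ‖formsProdDeriv l s u‖ := by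
    have hsplit := norm_sub_norm_le (formsProd l (s \ t) u • formsProdDeriv l t u)
      (-(formsProd l t u • formsProdDeriv l (s \ t) u))
    rw [sub_neg_eq_add, ← formsProdDeriv_eq_add_sdiff ht, norm_neg, norm_smul, norm_smul] at hsplit
    have : 2 * M / a * γ * a = 2 * (γ * M) := by field_simp
    nlinarith [mul_le_mul_of_nonneg_right hah (norm_nonneg (formsProdDeriv l t u)),
      mul_le_mul_of_nonneg_left hM hγ.le, mul_le_mul_of_nonneg_right hMγ ha.le]
  have hγn : γ ^ #s ≤ max 1 (C ^ #s) * τ ^ #s * γ :=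
    pow_le_of_pow_le_of_le_one hγ.le hg1 (norm_nonneg _) htne.card_pos.ne' (card_le_card ht) hIH
  have hP : ‖formsProd l s u‖ = ‖formsProd l (s \ t) u‖ * γ := by
    rw [formsProd_eq_mul_sdiff ht, norm_mul]
  have hτ : τ ≤ 2 / a * ‖formsProdDeriv l s u‖ := by
    rw [div_mul_eq_mul_div, le_div_iff₀ ha]; linarith
  have hγP : γ ≤ ‖formsProd l s u‖ / a := by
    rw [le_div_iff₀ ha, hP]; nlinarith
  have hA : 0 ≤ A := ha.le.trans (hah.trans hhA)
  unfold LojasiewiczIneq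
  calc ‖formsProd l s u‖ ^ #s = ‖formsProd l (s \ t) u‖ ^ #s * γ ^ #s := by rw [hP, mul_pow]
    _ ≤ A ^ #s * (max 1 (C ^ #s) * τ ^ #s * γ) := by gcongr
    _ ≤ A ^ #s * (max 1 (C ^ #s) * (2 / a * ‖formsProdDeriv l s u‖) ^ #s *
          (‖formsProd l s u‖ / a)) := by gcongr
    _ = A ^ #s * max 1 (C ^ #s) * (2 / a) ^ #s / a * ‖formsProdDeriv l s u‖ ^ #s *
          ‖formsProd l s u‖ := by ring

theorem eventually_lojasiewiczIneq_of_split {t : Finset ι} (ht : t ⊆ s) (htne : t.Nonempty)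
    {u : E} (hh : formsProd l (s \ t) u ≠ 0) (hg : formsProd l t u = 0) {C : ℝ} (hC : 0 ≤ C)
    (hIH : ∀ v, LojasiewiczIneq l t C v) : ∃ C', ∀ᶠ v in 𝓝 u, LojasiewiczIneq l s C' v := by
  set a := ‖formsProd l (s \ t) u‖ / 2
  set A := ‖formsProd l (s \ t) u‖ + 1
  set M := ‖formsProdDeriv l (s \ t) u‖ + 1
  have ha : 0 < a := half_pos (norm_pos_iff.2 hh)
  have hhc : Continuous fun v => ‖formsProd l (s \ t) v‖ := (continuous_formsProd l _).norm
  have hgc : Continuous fun v => ‖formsProd l t v‖ := (continuous_formsProd l _).norm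
  have hDc : Continuous fun v => ‖formsProdDeriv l (s \ t) v‖ :=
    (continuous_formsProdDeriv l _).norm
  have hsmall : Continuous fun v => C * (2 * M / a) ^ #t * ‖formsProd l t v‖ :=
    continuous_const.mul hgc
  refine ⟨A ^ #s * max 1 (C ^ #s) * (2 / a) ^ #s / a, ?_⟩
  filter_upwards [hhc.continuousAt.eventually (lt_mem_nhds (half_lt_self (norm_pos_iff.2 hh))),
    hhc.continuousAt.eventually (gt_mem_nhds (lt_add_one _)),
    hDc.continuousAt.eventually (gt_mem_nhds (lt_add_one _)),
    hgc.continuousAt.eventually (gt_mem_nhds (by simp [hg] : ‖formsProd l t u‖ < 1)),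
    hsmall.continuousAt.eventually
      (gt_mem_nhds (by simp [hg] : C * (2 * M / a) ^ #t * ‖formsProd l t u‖ < 1))]
    with v h1 h2 h3 h4 h5
  exact lojasiewiczIneq_of_split ht htne ha hC (hIH v) h1.le h2.le h3.le h4.le h5

theorem exists_eventually_lojasiewiczIneq {u : E} (hu : ∃ i ∈ s, l i u ≠ 0)
    (IH : ∀ t ⊂ s, ∃ C, 0 < C ∧ ∀ v, LojasiewiczIneq l t C v) :
    ∃ C, ∀ᶠ v in 𝓝 u, LojasiewiczIneq l s C v := by
  obtain ⟨i, hi, hiu⟩ := hu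
  set t := s.filter (l · u = 0)
  have hh : formsProd l (s \ t) u ≠ 0 :=
    prod_ne_zero_iff.2 fun j hj => by simpa [t, (mem_sdiff.1 hj).1] using (mem_sdiff.1 hj).2
  rcases t.eq_empty_or_nonempty with ht | ht
  · rw [ht, sdiff_empty] at hh
    exact eventually_lojasiewiczIneq_of_formsProd_ne_zero ⟨i, hi⟩ hh
  obtain ⟨C, hC, hIH⟩ :=
    IH t (ssubset_iff_of_subset (filter_subset _ _) |>.2 ⟨i, hi, by simp [hiu]⟩)
  obtain ⟨j, hj⟩ := ht
  exact eventually_lojasiewiczIneq_of_split (filter_subset _ _) ⟨j, hj⟩ hh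
    (prod_eq_zero hj (mem_filter.1 hj).2) hC.le hIH

end Lojasiewicz

section InnerProduct

variable [InnerProductSpace 𝕜 E] [FiniteDimensional 𝕜 E] [DecidableEq ι] {l : ι → E →L[𝕜] 𝕜}
  {s : Finset ι}

theorem lojasiewiczIneq_of_forall_sphere (hs : s.Nonempty) {C : ℝ}
    (h : ∀ u ∈ Metric.sphere (0 : E) 1 ∩ (commonKer l s)ᗮ, LojasiewiczIneq l s C u) (u : E) :
    LojasiewiczIneq l s C u := by
  obtain ⟨p, hpK, hup⟩ : ∃ p ∈ (commonKer l s)ᗮ, ∀ i ∈ s, l i u = l i p := by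
    refine ⟨_, (commonKer l s)ᗮ.starProjection_apply_mem u, fun i hi => ?_⟩
    have := (commonKer l s)ᗮ.sub_starProjection_mem_orthogonal u
    rw [Submodule.orthogonal_orthogonal, mem_commonKer] at this
    have := this i hi
    rwa [map_sub, sub_eq_zero] at this
  have hp : LojasiewiczIneq l s C p := by
    by_cases hp0 : p = 0
    · obtain ⟨i, hi⟩ := hs
      exact lojasiewiczIneq_of_formsProd_eq_zero (by rw [hp0]; exact prod_eq_zero hi (map_zero _)) C
    have hnorm : (‖p‖ : 𝕜) ≠ 0 := by simpa using hp0
    rw [← smul_inv_smul₀ hnorm p]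
    refine (h _ ⟨?_, Submodule.smul_mem _ _ hpK⟩).smul _
    rw [mem_sphere_zero_iff_norm, norm_smul, norm_inv, RCLike.norm_ofReal, abs_norm,
      inv_mul_cancel₀ (norm_ne_zero_iff.2 hp0)]
  unfold LojasiewiczIneq
  rwa [formsProd_congr hup, formsProdDeriv_congr hup]

variable (l s) in
theorem exists_lojasiewiczIneq : ∃ C, 0 < C ∧ ∀ u, LojasiewiczIneq l s C u := by
  induction s using Finset.strongInduction with | H s IH =>
  rcases s.eq_empty_or_nonempty with rfl | hs
  · exact ⟨1, one_pos, fun u => by simp [LojasiewiczIneq, formsProd, formsProdDeriv]⟩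
  have := FiniteDimensional.proper_rclike 𝕜 E
  have hT : IsCompact (Metric.sphere (0 : E) 1 ∩ (commonKer l s)ᗮ) :=
    (isCompact_sphere 0 1).inter_right (Submodule.closed_of_finiteDimensional _)
  have hne : ∀ u ∈ Metric.sphere (0 : E) 1 ∩ (commonKer l s)ᗮ, ∃ i ∈ s, l i u ≠ 0 := by
    rintro u ⟨hu1, hu⟩
    by_contra! h0
    have : u = 0 := (commonKer l s).inf_orthogonal_eq_bot.le ⟨mem_commonKer.2 h0, hu⟩
    simp [this] at hu1
  obtain ⟨C, hC⟩ := hT.exists_forall_of_forall_eventually (fun _ _ _ hCC' h => h.mono hCC')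
    fun u hu => exists_eventually_lojasiewiczIneq (hne u hu) IH
  exact ⟨max C 1, by positivity, fun u =>
    (lojasiewiczIneq_of_forall_sphere hs hC u).mono (le_max_left _ _)⟩

variable (l) in
theorem exists_pos_le_norm_formsProdDeriv (hs : s.Nonempty) :
    ∃ c, 0 < c ∧ ∀ x, ‖formsProd l s x‖ = 1 → c ≤ ‖formsProdDeriv l s x‖ := by
  obtain ⟨C, hC, h⟩ := exists_lojasiewiczIneq l s
  refine ⟨min 1 C⁻¹, by positivity, fun x hx => ?_⟩
  have h1 : 1 ≤ C * ‖formsProdDeriv l s x‖ ^ #s := by simpa [LojasiewiczIneq, hx] using h x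
  rcases le_or_gt 1 ‖formsProdDeriv l s x‖ with h2 | h2
  · exact (min_le_left _ _).trans h2
  calc min 1 C⁻¹ ≤ C⁻¹ := min_le_right _ _
    _ ≤ ‖formsProdDeriv l s x‖ ^ #s := by rwa [inv_le_iff_one_le_mul₀' hC]
    _ ≤ ‖formsProdDeriv l s x‖ := pow_le_of_le_one (norm_nonneg _) h2.le hs.card_pos.ne'

end InnerProduct

end LinearForms

open LinearForms

theorem exists_mem_ker_inner_sub_eq_zero {𝕜 E : Type*} [RCLike 𝕜] [NormedAddCommGroup E]
    [InnerProductSpace 𝕜 E] [CompleteSpace E] (L : E →L[𝕜] 𝕜) (x : E) :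
    ∃ v, L v = 0 ∧ inner 𝕜 (x - v) v = 0 ∧ ‖x - v‖ * ‖L‖ = ‖L x‖ := by
  set w := (InnerProductSpace.toDual 𝕜 E).symm L
  have hw : ∀ y, inner 𝕜 w y = L y := fun y => InnerProductSpace.toDual_symm_apply
  have hnw : ‖w‖ = ‖L‖ := LinearIsometryEquiv.norm_map _ _
  rcases eq_or_ne w 0 with hw0 | hw0
  · have hL : L = 0 := norm_eq_zero.1 (hnw ▸ norm_eq_zero.2 hw0)
    exact ⟨x, by simp [hL], by simp, by simp [hL]⟩
  have hww : (‖w‖ : 𝕜) ^ 2 ≠ 0 := by simpa using hw0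
  set c : 𝕜 := L x / (‖w‖ : 𝕜) ^ 2
  have hv : L (x - c • w) = 0 := by
    rw [← hw, inner_sub_right, inner_smul_right, hw, inner_self_eq_norm_sq_to_K,
      div_mul_cancel₀ _ hww, sub_self]
  refine ⟨x - c • w, hv, ?_, ?_⟩
  · rw [sub_sub_cancel, inner_smul_left, hw, hv, mul_zero]
  · rw [sub_sub_cancel, norm_smul, ← hnw, norm_div, norm_pow, RCLike.norm_ofReal, abs_norm]
    field_simp

theorem vecAngle_le_of_inner_sub_eq_zero {x v : EuclideanSpace ℂ (Fin d)} (hx : x ≠ 0)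
    (h : inner ℂ (x - v) v = 0) : vecAngle x v ≤ π / 2 * (‖x - v‖ / ‖x‖) := by
  have hxpos : 0 < ‖x‖ := norm_pos_iff.2 hx
  have hpyth : ‖x‖ ^ 2 = ‖x - v‖ ^ 2 + ‖v‖ ^ 2 := by
    simpa [sq] using norm_add_sq_eq_norm_sq_add_norm_sq_of_inner_eq_zero (x - v) v h
  have hcos : ‖(inner ℂ x v : ℂ)‖ / (‖x‖ * ‖v‖) = ‖v‖ / ‖x‖ := by
    have hxv : inner ℂ x v = (‖v‖ : ℂ) ^ 2 :=
      calc inner ℂ x v = inner ℂ (x - v) v + inner ℂ v v := by rw [← inner_add_left, sub_add_cancel]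
        _ = (‖v‖ : ℂ) ^ 2 := by rw [h, zero_add, inner_self_eq_norm_sq_to_K]; rfl
    rcases eq_or_ne v 0 with rfl | hv
    · simp
    rw [hxv, norm_pow, Complex.norm_real, norm_norm]
    field_simp [norm_ne_zero_iff.2 hv]
  have hsin : sin (arccos (‖v‖ / ‖x‖)) = ‖x - v‖ / ‖x‖ := by
    rw [sin_arccos, div_pow, ← sqrt_sq (by positivity : 0 ≤ ‖x - v‖ / ‖x‖)]
    congr 1
    field_simp
    linarith
  unfold vecAngle
  rw [hcos, ← hsin]
  set θ := arccos (‖v‖ / ‖x‖)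
  -- Jordan's inequality `2 / π * θ ≤ sin θ` on `[0, π / 2]`
  have := mul_le_sin (arccos_nonneg (‖v‖ / ‖x‖)) (arccos_le_pi_div_two.2 (by positivity))
  calc θ = π / 2 * (2 / π * θ) := by field_simp
    _ ≤ π / 2 * sin θ := by gcongr

theorem sInf_vecAngle_le {x v : EuclideanSpace ℂ (Fin d)} (P : EuclideanSpace ℂ (Fin d) → Prop)
    (hv : P v) (hx : x ≠ 0) (h : inner ℂ (x - v) v = 0) :
    sInf {a | ∃ v, P v ∧ v ≠ 0 ∧ a = vecAngle x v} ≤ π / 2 * (‖x - v‖ / ‖x‖) := by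
  set S := {a | ∃ v, P v ∧ v ≠ 0 ∧ a = vecAngle x v}
  have hS : BddBelow S := ⟨0, by rintro _ ⟨v, -, -, rfl⟩; exact arccos_nonneg _⟩
  rcases eq_or_ne v 0 with rfl | hv0
  · rw [sub_zero, div_self (norm_ne_zero_iff.2 hx), mul_one]
    rcases S.eq_empty_or_nonempty with hSe | ⟨a, ha⟩
    · rw [hSe, Real.sInf_empty]
      positivity
    obtain ⟨w, hPw, hw0, rfl⟩ := ha
    exact (csInf_le hS ⟨w, hPw, hw0, rfl⟩).trans (arccos_le_pi_div_two.2 (by positivity))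
  exact (csInf_le hS ⟨v, hv, hv0, rfl⟩).trans (vecAngle_le_of_inner_sub_eq_zero hx h)

theorem product_of_linear_forms_transverse_to_infinity_general
    (ι : Type) [Fintype ι] [Nonempty ι] [DecidableEq ι]
    (l : ι → (EuclideanSpace ℂ (Fin d) →L[ℂ] ℂ)) :
    ∃ k : ℝ, 0 < k ∧ ∀ x : EuclideanSpace ℂ (Fin d),
      (∏ i, l i x) = 1 →
      sInf {a : ℝ | ∃ v : EuclideanSpace ℂ (Fin d),
          (∑ i, (∏ j ∈ univ.erase i, l j x) • l i) v = 0 ∧ v ≠ 0 ∧ a = vecAngle x v}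
        < k / ‖x‖ := by
  obtain ⟨c, hc, hD⟩ := exists_pos_le_norm_formsProdDeriv l (univ_nonempty (α := ι))
  refine ⟨π * Fintype.card ι / c, by positivity, fun x hx => ?_⟩
  have hP : formsProd l univ x = 1 := hx
  have hx0 : x ≠ 0 := by
    rintro rfl
    simp [formsProd] at hP
  obtain ⟨v, hv, horth, hdist⟩ := exists_mem_ker_inner_sub_eq_zero (formsProdDeriv l univ x) x
  have hxv : ‖x - v‖ ≤ Fintype.card ι / c := by
    rw [formsProdDeriv_apply_self, hP, mul_one, card_univ, RCLike.norm_natCast] at hdist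
    rw [le_div_iff₀ hc, ← hdist]
    gcongr
    exact hD x (by simp [hP])
  have hxpos : 0 < ‖x‖ := norm_pos_iff.2 hx0
  calc _ ≤ π / 2 * (‖x - v‖ / ‖x‖) := sInf_vecAngle_le (formsProdDeriv l univ x · = 0) hv hx0 horth
    _ ≤ π / 2 * (Fintype.card ι / c / ‖x‖) := by gcongr
    _ < π * Fintype.card ι / c / ‖x‖ := by
      have : (0 : ℝ) < Fintype.card ι / c := div_pos (by exact_mod_cast Fintype.card_pos) hc
      rw [← mul_div_assoc, div_lt_div_iff_of_pos_right hxpos, mul_div_assoc]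
      linarith [mul_pos pi_pos this]

/-- Let `f = ∏ᵢ lᵢ` be a finite product of nonzero linear forms on
`ℂ^d` and `X = f⁻¹(1)`; the tangent space at `x ∈ X` is the kernel of
`d_x f = ∑ᵢ (∏_{j≠i} lⱼ(x)) • lᵢ`.  Then `X` is transverse to infinity: there is
`k > 0` such that for every `x ∈ X` the angle between `x` and `T_x X` (infimum of
angles between `x` and nonzero tangent vectors) is less than `k/‖x‖`. -/
theorem product_of_linear_forms_transverse_to_infinity
    (ι : Type) [Fintype ι] [Nonempty ι] [DecidableEq ι]
    (l : ι → (EuclideanSpace ℂ (Fin d) →L[ℂ] ℂ)) (hl : ∀ i, l i ≠ 0) :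
    ∃ k : ℝ, 0 < k ∧ ∀ x : EuclideanSpace ℂ (Fin d),
      (∏ i, l i x) = 1 →
      sInf {a : ℝ | ∃ v : EuclideanSpace ℂ (Fin d),
          (∑ i, (∏ j ∈ univ.erase i, l j x) • l i) v = 0 ∧ v ≠ 0 ∧ a = vecAngle x v}
        < k / ‖x‖ :=
  product_of_linear_forms_transverse_to_infinity_general ι l
end
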